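/- arXiv:1102.2853 — 6 statements merged into one kernel-verified Lean document; each statement's English description precedes it below -/
import Mathlib

section
/- Let (Ω, P) be a probability space, ι a finite index set, A : ι → Set Ω a family of measurable events, and G a simple graph on ι that is a dependency graph for the family. Suppose there are real numbers x : ι → ℝ with 0 < x i < 1 for all i, such that for every i ∈ ι, P(A i) ≤ x i · ∏_{j adjacent to i in G} (1 − x j). Then P(⋂_{i ∈ ι} (A i)ᶜ) ≥ ∏_{i ∈ ι} (1 − x i) > 0; in particular P(⋂_{i ∈ ι} (A i)ᶜ) > 0. -/
open MeasureTheory Finset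

/-- **Lovász Local Lemma.** If `G` is a dependency graph for a finite family of
events `A i` and there are reals `0 < x i < 1` with
`P(A i) ≤ x i * ∏_{j ~ i} (1 - x j)`, then
`P(⋂ i, (A i)ᶜ) ≥ ∏ i, (1 - x i) > 0`. -/
theorem lovasz_local_lemma
    {Ω : Type*} [MeasurableSpace Ω] (P : Measure Ω) [IsProbabilityMeasure P]
    {ι : Type*} [Fintype ι] [DecidableEq ι]
    (A : ι → Set Ω) (hA : ∀ i, MeasurableSet (A i))
    (G : SimpleGraph ι) [DecidableRel G.Adj]
    (hdep : ∀ (i : ι) (S : Finset ι), (∀ j ∈ S, j ≠ i ∧ ¬ G.Adj i j) →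
      P (A i ∩ ⋂ j ∈ S, (A j)ᶜ) = P (A i) * P (⋂ j ∈ S, (A j)ᶜ))
    (x : ι → ℝ) (hx0 : ∀ i, 0 < x i) (hx1 : ∀ i, x i < 1)
    (hP : ∀ i, P (A i) ≤ ENNReal.ofReal (x i * ∏ j ∈ G.neighborFinset i, (1 - x j))) :
    ENNReal.ofReal (∏ i, (1 - x i)) ≤ P (⋂ i, (A i)ᶜ) ∧
      (0 : ℝ) < ∏ i, (1 - x i) ∧
      0 < P (⋂ i, (A i)ᶜ) := by
  classical
  set C : Finset ι → Set Ω := fun S => ⋂ j ∈ S, (A j)ᶜ with hCdef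
  have hCmono : ∀ {S T : Finset ι}, S ⊆ T → C T ⊆ C S := by
    intro S T h ω hω
    simp only [hCdef, Set.mem_iInter] at hω ⊢
    exact fun j hj => hω j (h hj)
  have hfin : ∀ s : Set Ω, P s ≠ ⊤ := fun s => measure_ne_top P s
  -- additivity: splitting off one event
  have hsplit : ∀ (j : ι) (T : Finset ι),
      (P (C (insert j T))).toReal = (P (C T)).toReal - (P (A j ∩ C T)).toReal := by
    intro j T
    have h2 : C (insert j T) = C T \ A j := by
      ext ω
      simp only [hCdef, Set.mem_iInter, Set.mem_diff, Set.mem_compl_iff,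
        Finset.mem_insert]
      constructor
      · intro h; exact ⟨fun k hk => h k (Or.inr hk), h j (Or.inl rfl)⟩
      · rintro ⟨h1, h2⟩ k (rfl | hk)
        · exact h2
        · exact h1 k hk
    have h1 : P (C T ∩ A j) + P (C T \ A j) = P (C T) :=
      measure_inter_add_diff (C T) (hA j)
    have h3 : (P (C T ∩ A j)).toReal + (P (C T \ A j)).toReal = (P (C T)).toReal := by
      rw [← ENNReal.toReal_add (hfin _) (hfin _), h1]
    rw [h2, Set.inter_comm (A j) (C T)]
    linarith
  -- the key conditional bound, by strong induction on S
  have key : ∀ S : Finset ι, ∀ i ∉ S,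
      (P (A i ∩ C S)).toReal ≤ x i * (P (C S)).toReal := by
    intro S
    induction S using Finset.strongInduction with
    | _ S IH =>
      intro i hi
      set S₁ : Finset ι := S.filter (fun j => G.Adj i j) with hS₁def
      set S₂ : Finset ι := S.filter (fun j => ¬ G.Adj i j) with hS₂def
      have hS12 : S₂ ∪ S₁ = S := by
        rw [hS₁def, hS₂def, Finset.union_comm]
        exact Finset.filter_union_filter_not_eq _ S
      have hsub2 : S₂ ⊆ S := Finset.filter_subset _ _
      have hsub1 : S₁ ⊆ S := Finset.filter_subset _ _
      -- peeling lemma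
      have peel : ∀ T ⊆ S₁,
          (∏ j ∈ T, (1 - x j)) * (P (C S₂)).toReal ≤ (P (C (S₂ ∪ T))).toReal := by
        intro T
        induction T using Finset.induction with
        | empty => intro _; simp
        | @insert j T hjT IHT =>
          intro hTsub
          have hj1 : j ∈ S₁ := hTsub (Finset.mem_insert_self j T)
          have hT : T ⊆ S₁ := fun k hk => hTsub (Finset.mem_insert_of_mem hk)
          have hjS : j ∈ S := hsub1 hj1
          have hjnot2 : j ∉ S₂ := by
            rw [hS₂def, Finset.mem_filter]
            push_neg
            intro _
            exact (Finset.mem_filter.mp hj1).2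
          have hjnot : j ∉ S₂ ∪ T := by
            simp only [Finset.mem_union]
            push_neg
            exact ⟨hjnot2, hjT⟩
          have hssub : S₂ ∪ T ⊂ S := by
            refine Finset.ssubset_iff_of_subset ?_ |>.mpr ⟨j, hjS, hjnot⟩
            exact Finset.union_subset hsub2 (hT.trans hsub1)
          have hinot : i ∉ S₂ ∪ T := fun h => hi (Finset.union_subset hsub2 (hT.trans hsub1) h)
          have hIH := IH _ hssub j hjnot
          have hrw : S₂ ∪ insert j T = insert j (S₂ ∪ T) := by
            ext k; simp only [Finset.mem_union, Finset.mem_insert]; tauto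
          rw [hrw, hsplit j (S₂ ∪ T), Finset.prod_insert hjT]
          have hIHT := IHT hT
          have h0 : (0:ℝ) ≤ 1 - x j := by linarith [hx1 j]
          nlinarith [hIHT, hIH, ENNReal.toReal_nonneg (a := P (C (S₂ ∪ T)))]
      have hpeel := peel S₁ (Finset.Subset.refl S₁)
      rw [hS12] at hpeel
      -- dependency for S₂
      have hdep2 : P (A i ∩ C S₂) = P (A i) * P (C S₂) := by
        refine hdep i S₂ (fun j hj => ⟨?_, (Finset.mem_filter.mp hj).2⟩)
        rintro rfl
        exact hi (hsub2 hj)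
      have hmono : (P (A i ∩ C S)).toReal ≤ (P (A i ∩ C S₂)).toReal :=
        ENNReal.toReal_mono (hfin _)
          (measure_mono (Set.inter_subset_inter_right _ (hCmono hsub2)))
      have hprodnn : (0:ℝ) ≤ ∏ j ∈ G.neighborFinset i, (1 - x j) :=
        Finset.prod_nonneg fun j _ => by linarith [hx1 j]
      have hPi : (P (A i)).toReal ≤ x i * ∏ j ∈ G.neighborFinset i, (1 - x j) :=
        ENNReal.toReal_le_of_le_ofReal (mul_nonneg (hx0 i).le hprodnn) (hP i)
      have hS₁N : S₁ ⊆ G.neighborFinset i := by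
        intro j hj
        rw [SimpleGraph.mem_neighborFinset]
        exact (Finset.mem_filter.mp hj).2
      have hprodle : ∏ j ∈ G.neighborFinset i, (1 - x j) ≤ ∏ j ∈ S₁, (1 - x j) := by
        have hsd := Finset.prod_sdiff (f := fun j => (1 - x j)) hS₁N
        have hle1 : ∏ j ∈ G.neighborFinset i \ S₁, (1 - x j) ≤ 1 :=
          Finset.prod_le_one (fun j _ => by linarith [hx1 j]) (fun j _ => by linarith [hx0 j])
        have hnn1 : (0:ℝ) ≤ ∏ j ∈ S₁, (1 - x j) :=
          Finset.prod_nonneg fun j _ => by linarith [hx1 j]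
        nlinarith [hsd]
      have heq : (P (A i ∩ C S₂)).toReal = (P (A i)).toReal * (P (C S₂)).toReal := by
        rw [hdep2, ENNReal.toReal_mul]
      have hp2 : (0:ℝ) ≤ (P (C S₂)).toReal := ENNReal.toReal_nonneg
      calc (P (A i ∩ C S)).toReal ≤ (P (A i)).toReal * (P (C S₂)).toReal := by
              rw [← heq]; exact hmono
        _ ≤ (x i * ∏ j ∈ S₁, (1 - x j)) * (P (C S₂)).toReal := by
              apply mul_le_mul_of_nonneg_right _ hp2
              exact hPi.trans (mul_le_mul_of_nonneg_left hprodle (hx0 i).le)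
        _ = x i * ((∏ j ∈ S₁, (1 - x j)) * (P (C S₂)).toReal) := by ring
        _ ≤ x i * (P (C S)).toReal := mul_le_mul_of_nonneg_left hpeel (hx0 i).le
  -- lower bound on P(C S)
  have lower : ∀ S : Finset ι, ∏ j ∈ S, (1 - x j) ≤ (P (C S)).toReal := by
    intro S
    induction S using Finset.induction with
    | empty => simp [hCdef]
    | @insert j T hj IHT =>
      rw [Finset.prod_insert hj, hsplit j T]
      have hkey := key T j hj
      have h0 : (0:ℝ) ≤ 1 - x j := by linarith [hx1 j]
      nlinarith [ENNReal.toReal_nonneg (a := P (C T))]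
  have hCuniv : (⋂ i, (A i)ᶜ) = C Finset.univ := by
    simp [hCdef]
  have hpos : (0:ℝ) < ∏ i, (1 - x i) :=
    Finset.prod_pos fun i _ => by linarith [hx1 i]
  have h1 : ENNReal.ofReal (∏ i, (1 - x i)) ≤ P (⋂ i, (A i)ᶜ) := by
    rw [hCuniv]
    exact ENNReal.ofReal_le_of_le_toReal (lower Finset.univ)
  exact ⟨h1, hpos, lt_of_lt_of_le (ENNReal.ofReal_pos.mpr hpos) h1⟩
end

section
/- Let V be a finite index set of variables with probability spaces (Ω_v, P_v) for v ∈ V, let Ω = ∏_{v ∈ V} Ω_v carry the product probability measure P, let ι be a finite index set, A : ι → Set Ω a family of measurable events, and vbl : ι → Finset V such that each A i is determined by the coordinates in vbl(i). Let G be a simple graph on ι such that any two distinct non-adjacent indices i, j satisfy vbl(i) ∩ vbl(j) = ∅. Suppose there are real numbers x : ι → ℝ with 0 < x i < 1 such that for every i ∈ ι, P(A i) ≤ x i · ∏_{j adjacent to i in G} (1 − x j). Then there exists an assignment ω ∈ Ω of the variables such that ω ∉ A i for every i ∈ ι. -/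
open MeasureTheory Finset

lemma mt_indep {V : Type*} [Fintype V] {Ωv : V → Type*} [∀ v, MeasurableSpace (Ωv v)]
    (Pv : ∀ v, Measure (Ωv v)) [∀ v, IsProbabilityMeasure (Pv v)]
    (s : Set V) (B C : Set (∀ v, Ωv v)) (hB : MeasurableSet B) (hC : MeasurableSet C)
    (hBdet : ∀ ω ω' : (∀ v, Ωv v), (∀ v ∈ s, ω v = ω' v) → (ω ∈ B ↔ ω' ∈ B))
    (hCdet : ∀ ω ω' : (∀ v, Ωv v), (∀ v ∉ s, ω v = ω' v) → (ω ∈ C ↔ ω' ∈ C)) :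
    Measure.pi Pv (B ∩ C) = Measure.pi Pv B * Measure.pi Pv C := by
  classical
  haveI : ∀ v, Nonempty (Ωv v) := fun v => by
    by_contra h
    rw [not_nonempty_iff] at h
    have : (Pv v) Set.univ = 1 := measure_univ
    rw [Set.univ_eq_empty_iff.2 h] at this
    simp at this
  set e := MeasurableEquiv.piEquivPiSubtypeProd Ωv (· ∈ s) with he
  have hmp := measurePreserving_piEquivPiSubtypeProd Pv (· ∈ s)
  have hmps := hmp.symm e
  set ρ := (Measure.pi fun v : {v // v ∈ s} => Pv v).prod
    (Measure.pi fun v : {v // ¬ v ∈ s} => Pv v) with hρ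
  have hagree1 : ∀ (y : ∀ v : {v // v ∈ s}, Ωv v) (z z' : ∀ v : {v // ¬ v ∈ s}, Ωv v),
      ∀ v ∈ s, e.symm (y, z) v = e.symm (y, z') v := by
    intro y z z' v hv
    simp [he, MeasurableEquiv.piEquivPiSubtypeProd, Equiv.piEquivPiSubtypeProd, hv]
  have hagree2 : ∀ (y y' : ∀ v : {v // v ∈ s}, Ωv v) (z : ∀ v : {v // ¬ v ∈ s}, Ωv v),
      ∀ v ∉ s, e.symm (y, z) v = e.symm (y', z) v := by
    intro y y' z v hv
    simp [he, MeasurableEquiv.piEquivPiSubtypeProd, Equiv.piEquivPiSubtypeProd, hv]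
  set B₁ : Set (∀ v : {v // v ∈ s}, Ωv v) := {y | ∀ z, e.symm (y, z) ∈ B} with hB₁
  set C₁ : Set (∀ v : {v // ¬ v ∈ s}, Ωv v) := {z | ∀ y, e.symm (y, z) ∈ C} with hC₁
  have hBpre : e.symm ⁻¹' B = B₁ ×ˢ Set.univ := by
    ext ⟨y, z⟩
    simp only [Set.mem_preimage, Set.mem_prod, Set.mem_univ, and_true, hB₁, Set.mem_setOf_eq]
    constructor
    · intro h z'
      exact (hBdet _ _ (hagree1 y z z')).1 h
    · intro h; exact h z
  have hCpre : e.symm ⁻¹' C = Set.univ ×ˢ C₁ := by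
    ext ⟨y, z⟩
    simp only [Set.mem_preimage, Set.mem_prod, Set.mem_univ, true_and, hC₁, Set.mem_setOf_eq]
    constructor
    · intro h y'
      exact (hCdet _ _ (hagree2 y y' z)).1 h
    · intro h; exact h y
  have hμB : Measure.pi Pv B = ρ (B₁ ×ˢ Set.univ) := by
    rw [← hBpre]
    exact (hmps.measure_preimage hB.nullMeasurableSet).symm
  have hμC : Measure.pi Pv C = ρ (Set.univ ×ˢ C₁) := by
    rw [← hCpre]
    exact (hmps.measure_preimage hC.nullMeasurableSet).symm
  have hμBC : Measure.pi Pv (B ∩ C) = ρ (B₁ ×ˢ C₁) := by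
    have : e.symm ⁻¹' (B ∩ C) = B₁ ×ˢ C₁ := by
      rw [Set.preimage_inter, hBpre, hCpre, Set.prod_inter_prod, Set.univ_inter, Set.inter_univ]
    rw [← this]
    exact (hmps.measure_preimage (hB.inter hC).nullMeasurableSet).symm
  rw [hμB, hμC, hμBC, hρ]
  rw [Measure.prod_prod, Measure.prod_prod, Measure.prod_prod]
  simp [measure_univ]

/-- **Moser–Tardos algorithmic Local Lemma (existence part).** Events determined
by finite sets of independent random variables, with a variable-dependency graph
and the Lovász condition, admit a violating-free assignment of the variables. -/
theorem moser_tardos_local_lemma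
    {V : Type*} [Fintype V] [DecidableEq V]
    {Ωv : V → Type*} [∀ v, MeasurableSpace (Ωv v)]
    (Pv : ∀ v, Measure (Ωv v)) [∀ v, IsProbabilityMeasure (Pv v)]
    {ι : Type*} [Fintype ι] [DecidableEq ι]
    (A : ι → Set (∀ v, Ωv v)) (hA : ∀ i, MeasurableSet (A i))
    (vbl : ι → Finset V)
    (hdet : ∀ i, ∀ ω ω' : (∀ v, Ωv v),
      (∀ v ∈ vbl i, ω v = ω' v) → (ω ∈ A i ↔ ω' ∈ A i))
    (G : SimpleGraph ι) [DecidableRel G.Adj]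
    (hvbl : ∀ i j, i ≠ j → ¬ G.Adj i j → vbl i ∩ vbl j = ∅)
    (x : ι → ℝ) (hx0 : ∀ i, 0 < x i) (hx1 : ∀ i, x i < 1)
    (hP : ∀ i, Measure.pi Pv (A i) ≤
      ENNReal.ofReal (x i * ∏ j ∈ G.neighborFinset i, (1 - x j))) :
    ∃ ω : (∀ v, Ωv v), ∀ i, ω ∉ A i := by
  classical
  set μ := Measure.pi Pv with hμ
  set E : Finset ι → Set (∀ v, Ωv v) := fun S => ⋂ j ∈ S, (A j)ᶜ with hE
  have hEmeas : ∀ S, MeasurableSet (E S) := fun S =>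
    MeasurableSet.biInter S.countable_toSet (fun j _ => (hA j).compl)
  have hEmono : ∀ {S T : Finset ι}, S ⊆ T → E T ⊆ E S := by
    intro S T hST
    exact Set.biInter_subset_biInter_left (fun j hj => hST hj)
  have hEinsert : ∀ (j : ι) (S : Finset ι), E (insert j S) = E S \ A j := by
    intro j S
    ext ω
    simp only [hE, Set.mem_iInter, Set.mem_diff, Set.mem_compl_iff, Finset.mem_insert]
    constructor
    · intro h
      exact ⟨fun k hk => h k (Or.inr hk), h j (Or.inl rfl)⟩
    · rintro ⟨h1, h2⟩ k (rfl | hk)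
      · exact h2
      · exact h1 k hk
  have hμfin : ∀ s : Set (∀ v, Ωv v), μ s ≠ ⊤ := fun s => measure_ne_top μ s
  -- the key peeling-type bound
  have hstep : ∀ (j : ι) (T : Finset ι),
      μ (A j ∩ E T) ≤ ENNReal.ofReal (x j) * μ (E T) →
      ENNReal.ofReal (1 - x j) * μ (E T) ≤ μ (E (insert j T)) := by
    intro j T hIH
    rw [hEinsert]
    have hsplit : μ (E T ∩ A j) + μ (E T \ A j) = μ (E T) :=
      measure_inter_add_diff (E T) (hA j)
    have hdiff : μ (E T \ A j) = μ (E T) - μ (E T ∩ A j) := by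
      rw [← hsplit]
      rw [ENNReal.add_sub_cancel_left (hμfin _)]
    rw [hdiff]
    have h1 : ENNReal.ofReal (1 - x j) * μ (E T)
        = μ (E T) - ENNReal.ofReal (x j) * μ (E T) := by
      rw [ENNReal.ofReal_sub _ (hx0 j).le, ENNReal.ofReal_one, ENNReal.sub_mul, one_mul]
      intro _ _; exact hμfin _
    rw [h1]
    apply tsub_le_tsub_left
    rw [Set.inter_comm] at hIH
    exact hIH
  -- main conditional bound, by strong induction
  have key : ∀ S : Finset ι, ∀ i ∉ S, μ (A i ∩ E S) ≤ ENNReal.ofReal (x i) * μ (E S) := by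
    intro S
    induction S using Finset.strongInduction with
    | _ S IH =>
      intro i hi
      set S₁ := S.filter (G.Adj i) with hS₁
      set S₂ := S \ S₁ with hS₂
      have hS₁sub : S₁ ⊆ S := Finset.filter_subset _ _
      have hS₂sub : S₂ ⊆ S := Finset.sdiff_subset
      have hunion : S₂ ∪ S₁ = S := Finset.sdiff_union_of_subset hS₁sub
      -- independence: A i and E S₂ depend on disjoint coordinates
      have hindep : μ (A i ∩ E S₂) = μ (A i) * μ (E S₂) := by
        apply mt_indep Pv (↑(vbl i)) (A i) (E S₂) (hA i) (hEmeas S₂) (hdet i)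
        intro ω ω' hag
        have : ∀ j ∈ S₂, (ω ∈ (A j)ᶜ ↔ ω' ∈ (A j)ᶜ) := by
          intro j hj
          have hji : j ≠ i := fun h => hi (h ▸ hS₂sub hj)
          have hnadj : ¬ G.Adj i j := by
            intro hadj
            have : j ∈ S₁ := Finset.mem_filter.2 ⟨hS₂sub hj, hadj⟩
            exact (Finset.mem_sdiff.1 hj).2 this
          have hdisj := hvbl i j (Ne.symm hji) hnadj
          have : ∀ v ∈ vbl j, ω v = ω' v := by
            intro v hv
            apply hag
            intro hvi
            have : v ∈ vbl i ∩ vbl j := Finset.mem_inter.2 ⟨hvi, hv⟩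
            rw [hdisj] at this
            exact absurd this (Finset.notMem_empty v)
          exact not_iff_not.2 (hdet j ω ω' this)
        constructor <;> intro hm <;> simp only [hE, Set.mem_iInter] at hm ⊢ <;>
          intro j hj
        · exact (this j hj).1 (hm j hj)
        · exact (this j hj).2 (hm j hj)
      -- peeling: lower bound for μ (E (S₂ ∪ T)) for T ⊆ S₁
      have peel : ∀ T : Finset ι, T ⊆ S₁ →
          ENNReal.ofReal (∏ j ∈ T, (1 - x j)) * μ (E S₂) ≤ μ (E (S₂ ∪ T)) := by
        intro T
        induction T using Finset.induction with
        | empty => simp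
        | @insert j T hj ih =>
          intro hsub
          have hjS₁ : j ∈ S₁ := hsub (Finset.mem_insert_self j T)
          have hTsub : T ⊆ S₁ := fun a ha => hsub (Finset.mem_insert_of_mem ha)
          have hjT' : j ∉ S₂ ∪ T := by
            rw [Finset.mem_union]
            rintro (h | h)
            · exact (Finset.mem_sdiff.1 h).2 hjS₁
            · exact hj h
          have hss : S₂ ∪ T ⊂ S := by
            apply Finset.ssubset_iff_of_subset (Finset.union_subset hS₂sub
              (hTsub.trans hS₁sub)) |>.2
            exact ⟨j, hS₁sub hjS₁, hjT'⟩
          have hIH' := IH _ hss j hjT'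
          have hrw : S₂ ∪ insert j T = insert j (S₂ ∪ T) := by
            ext a; simp [Finset.mem_union, Finset.mem_insert, or_left_comm, or_assoc]
          rw [hrw]
          calc ENNReal.ofReal (∏ k ∈ insert j T, (1 - x k)) * μ (E S₂)
              = ENNReal.ofReal (1 - x j) * (ENNReal.ofReal (∏ k ∈ T, (1 - x k)) * μ (E S₂)) := by
                rw [Finset.prod_insert hj, ENNReal.ofReal_mul (by linarith [hx1 j]), mul_assoc]
            _ ≤ ENNReal.ofReal (1 - x j) * μ (E (S₂ ∪ T)) :=
                mul_le_mul_right (ih hTsub) _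
            _ ≤ μ (E (insert j (S₂ ∪ T))) := hstep j (S₂ ∪ T) hIH'
      -- product over neighbors is at most product over S₁
      have hprodle : (∏ j ∈ G.neighborFinset i, (1 - x j)) ≤ ∏ j ∈ S₁, (1 - x j) := by
        have hsubN : S₁ ⊆ G.neighborFinset i := by
          intro j hjf
          exact (SimpleGraph.mem_neighborFinset G i j).2 (Finset.mem_filter.1 hjf).2
        rw [← Finset.prod_sdiff hsubN]
        have h1 : (∏ j ∈ G.neighborFinset i \ S₁, (1 - x j)) ≤ 1 :=
          Finset.prod_le_one (fun j _ => by linarith [hx1 j]) (fun j _ => by linarith [hx0 j])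
        have h2 : (0:ℝ) ≤ ∏ j ∈ S₁, (1 - x j) :=
          Finset.prod_nonneg (fun j _ => by linarith [hx1 j])
        nlinarith
      calc μ (A i ∩ E S)
          ≤ μ (A i ∩ E S₂) := measure_mono (Set.inter_subset_inter_right _ (hEmono hS₂sub))
        _ = μ (A i) * μ (E S₂) := hindep
        _ ≤ ENNReal.ofReal (x i * ∏ j ∈ G.neighborFinset i, (1 - x j)) * μ (E S₂) :=
            mul_le_mul_left (hP i) _
        _ = ENNReal.ofReal (x i) *
              (ENNReal.ofReal (∏ j ∈ G.neighborFinset i, (1 - x j)) * μ (E S₂)) := by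
            rw [ENNReal.ofReal_mul (hx0 i).le, mul_assoc]
        _ ≤ ENNReal.ofReal (x i) *
              (ENNReal.ofReal (∏ j ∈ S₁, (1 - x j)) * μ (E S₂)) := by
            exact mul_le_mul_right (mul_le_mul_left (ENNReal.ofReal_le_ofReal hprodle) _) _
        _ ≤ ENNReal.ofReal (x i) * μ (E (S₂ ∪ S₁)) :=
            mul_le_mul_right (peel S₁ (Finset.Subset.refl _)) _
        _ = ENNReal.ofReal (x i) * μ (E S) := by rw [hunion]
  -- positivity of μ (E S)
  have pos : ∀ S : Finset ι, ENNReal.ofReal (∏ j ∈ S, (1 - x j)) ≤ μ (E S) := by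
    intro S
    induction S using Finset.induction with
    | empty => simp [hE]
    | @insert i S hi ih =>
      calc ENNReal.ofReal (∏ j ∈ insert i S, (1 - x j))
          = ENNReal.ofReal (1 - x i) * ENNReal.ofReal (∏ j ∈ S, (1 - x j)) := by
            rw [Finset.prod_insert hi, ENNReal.ofReal_mul (by linarith [hx1 i])]
        _ ≤ ENNReal.ofReal (1 - x i) * μ (E S) := mul_le_mul_right ih _
        _ ≤ μ (E (insert i S)) := hstep i S (key S i hi)
  have hposuniv : 0 < μ (E Finset.univ) := by
    refine lt_of_lt_of_le ?_ (pos Finset.univ)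
    rw [ENNReal.ofReal_pos]
    exact Finset.prod_pos (fun j _ => by linarith [hx1 j])
  obtain ⟨ω, hω⟩ := nonempty_of_measure_ne_zero hposuniv.ne'
  refine ⟨ω, fun i hmem => ?_⟩
  exact (Set.mem_iInter₂.1 hω i (Finset.mem_univ i)) hmem
end

section
/- Let V be a finite index set of variables with probability spaces (Ω_v, P_v) for v ∈ V, let Ω = ∏_{v ∈ V} Ω_v carry the product probability measure P, let ι be a finite index set, A : ι → Set Ω a family of measurable events, and vbl : ι → Finset V such that each A i is determined by the coordinates in vbl(i). Let G be a simple graph on ι such that any two distinct non-adjacent indices i, j satisfy vbl(i) ∩ vbl(j) = ∅. Suppose there are real numbers μ : ι → ℝ with 0 < μ i for all i, such that for every i ∈ ι, P(A i) ≤ μ i / (∑_{I ⊆ Γ̄(i), I independent in G} ∏_{j ∈ I} μ j), where Γ̄(i) denotes the closed neighborhood of i in G. Then there exists an assignment ω ∈ Ω of the variables such that ω ∉ A i for every i ∈ ι. -/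
/-!
Write `q S = P(⋂_{j ∈ S} (A j)ᶜ)` and `Ξ T` for the independence polynomial of `G[T]` at `μ`.
The heart of the proof is the estimate `P(A i ∩ ⋂_{j ∈ S} (A j)ᶜ) · Ξ(Γ̄(i) \ S) ≤ μ i · q S`,
by strong induction on `S`. Removing from `S` the neighbours of `i` makes `A i` independent of the
remaining events, which gives the bound with `Ξ(Γ̄(i))`; the neighbours `d` are then added back one
at a time, each costing at most a factor `1 - μ d / Ξ(Γ̄(d) \ T)` in probability (induction
hypothesis) and winning at least that factor back in `Ξ` (`indepPoly_mul_le`). Since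
`Ξ(Γ̄(i) \ S) ≥ 1 + μ i`, it follows that `q (insert i S) ≥ (1 - μ i / Ξ(Γ̄(i) \ S)) · q S > 0`.
-/

open MeasureTheory Finset

namespace SimpleGraph

variable {ι : Type*} (G : SimpleGraph ι) [DecidableRel G.Adj] (μ : ι → ℝ)

def closedNeighborFinset [Fintype ι] [DecidableEq ι] (i : ι) : Finset ι :=
  insert i (G.neighborFinset i)

def indepSubsets (T : Finset ι) : Finset (Finset ι) :=
  T.powerset.filter fun I => ∀ a ∈ I, ∀ b ∈ I, ¬ G.Adj a b

def indepPoly (T : Finset ι) : ℝ := ∑ I ∈ G.indepSubsets T, ∏ j ∈ I, μ j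

variable {G μ}

theorem mem_indepSubsets {T I : Finset ι} :
    I ∈ G.indepSubsets T ↔ I ⊆ T ∧ ∀ a ∈ I, ∀ b ∈ I, ¬ G.Adj a b := by
  simp [indepSubsets]

theorem indepSubsets_mono {T U : Finset ι} (h : T ⊆ U) : G.indepSubsets T ⊆ G.indepSubsets U :=
  fun _ hI => mem_indepSubsets.2 ⟨(mem_indepSubsets.1 hI).1.trans h, (mem_indepSubsets.1 hI).2⟩

section Nonneg

variable (hμ : ∀ i, 0 ≤ μ i)
include hμ

theorem one_le_indepPoly (T : Finset ι) : 1 ≤ G.indepPoly μ T := by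
  have hempty : ∅ ∈ G.indepSubsets T := by simp [mem_indepSubsets]
  simpa [indepPoly] using single_le_sum (f := fun I => ∏ j ∈ I, μ j)
    (fun I _ => prod_nonneg fun j _ => hμ j) hempty

theorem indepPoly_pos (T : Finset ι) : 0 < G.indepPoly μ T :=
  one_pos.trans_le (one_le_indepPoly hμ T)

theorem indepPoly_mono {T U : Finset ι} (h : T ⊆ U) : G.indepPoly μ T ≤ G.indepPoly μ U :=
  sum_le_sum_of_subset_of_nonneg (indepSubsets_mono h) fun _ _ _ => prod_nonneg fun j _ => hμ j

end Nonneg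

variable [DecidableEq ι]

theorem indepPoly_insert [Fintype ι] {d : ι} {T : Finset ι} (hd : d ∉ T) :
    G.indepPoly μ (insert d T) =
      G.indepPoly μ T + μ d * G.indepPoly μ (T \ G.closedNeighborFinset d) := by
  have hfilter : G.indepSubsets (T \ G.closedNeighborFinset d) =
      T.powerset.filter fun I => ∀ a ∈ insert d I, ∀ b ∈ insert d I, ¬ G.Adj a b := by
    ext I
    simp only [mem_indepSubsets, mem_filter, mem_powerset, subset_sdiff, closedNeighborFinset]
    simp only [forall_mem_insert, G.irrefl, not_false_eq_true, true_and]
    simp only [Finset.disjoint_left, mem_insert, mem_neighborFinset, not_or]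
    constructor
    · rintro ⟨⟨hIT, hnadj⟩, hind⟩
      exact ⟨hIT, fun b hb => (hnadj hb).2,
        fun a ha => ⟨fun h => (hnadj ha).2 h.symm, hind a ha⟩⟩
    · rintro ⟨hIT, hnadj, hind⟩
      exact ⟨⟨hIT, fun a ha => ⟨fun h => hd (h ▸ hIT ha), hnadj a ha⟩⟩,
        fun a ha => (hind a ha).2⟩
  rw [indepPoly, indepPoly, indepPoly, hfilter, indepSubsets, indepSubsets,
    sum_filter, sum_filter, sum_filter, sum_powerset_insert hd, mul_sum]
  congr 1
  refine sum_congr rfl fun I hI => ?_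
  rw [prod_insert (fun h => hd (mem_powerset.1 hI h))]
  split_ifs <;> simp

theorem indepPoly_union_le (hμ : ∀ i, 0 ≤ μ i) (T U : Finset ι) :
    G.indepPoly μ (T ∪ U) ≤ G.indepPoly μ T * G.indepPoly μ U := by
  have hsplit : Set.InjOn (fun I => (I ∩ T, I \ T)) (G.indepSubsets (T ∪ U)) := by
    intro I _ J _ h
    simp only [Prod.mk.injEq] at h
    rw [← sdiff_union_inter I T, ← sdiff_union_inter J T, h.1, h.2]
  have hmaps : ∀ I ∈ G.indepSubsets (T ∪ U),
      (I ∩ T, I \ T) ∈ G.indepSubsets T ×ˢ G.indepSubsets U := by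
    intro I hI
    obtain ⟨hITU, hind⟩ := mem_indepSubsets.1 hI
    refine mem_product.2 ⟨mem_indepSubsets.2 ⟨inter_subset_right, ?_⟩,
      mem_indepSubsets.2 ⟨?_, ?_⟩⟩
    · exact fun a ha b hb => hind a (mem_inter.1 ha).1 b (mem_inter.1 hb).1
    · intro x hx
      obtain ⟨hxI, hxT⟩ := mem_sdiff.1 hx
      exact (mem_union.1 (hITU hxI)).resolve_left hxT
    · exact fun a ha b hb => hind a (mem_sdiff.1 ha).1 b (mem_sdiff.1 hb).1
  calc G.indepPoly μ (T ∪ U)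
      = ∑ p ∈ (G.indepSubsets (T ∪ U)).image fun I => (I ∩ T, I \ T),
          (∏ j ∈ p.1, μ j) * ∏ j ∈ p.2, μ j := by
        rw [sum_image hsplit, indepPoly]
        exact sum_congr rfl fun I _ => (prod_inter_mul_prod_sdiff I T μ).symm
    _ ≤ ∑ p ∈ G.indepSubsets T ×ˢ G.indepSubsets U,
          (∏ j ∈ p.1, μ j) * ∏ j ∈ p.2, μ j :=
        sum_le_sum_of_subset_of_nonneg (image_subset_iff.2 hmaps) fun p _ _ =>
          mul_nonneg (prod_nonneg fun j _ => hμ j) (prod_nonneg fun j _ => hμ j)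
    _ = G.indepPoly μ T * G.indepPoly μ U := by
        rw [sum_product, indepPoly, indepPoly, sum_mul_sum]

variable [Fintype ι]

theorem indepPoly_erase_add_le (hμ : ∀ i, 0 ≤ μ i) {d : ι} {U : Finset ι} (hd : d ∈ U) :
    G.indepPoly μ (U.erase d) + μ d ≤ G.indepPoly μ U := by
  rw [← insert_erase hd, erase_insert (notMem_erase d U), indepPoly_insert (notMem_erase d U)]
  nlinarith [one_le_indepPoly (G := G) hμ ((U.erase d) \ G.closedNeighborFinset d), hμ d]

theorem indepPoly_mul_le (hμ : ∀ i, 0 ≤ μ i) {d : ι} {W U : Finset ι} (hdW : d ∉ W)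
    (hdU : d ∈ U) (hWU : W ∩ G.neighborFinset d ⊆ U) :
    G.indepPoly μ W * G.indepPoly μ U ≤
      (G.indepPoly μ U - μ d) * G.indepPoly μ (insert d W) := by
  have hcover : W ⊆ (W \ G.closedNeighborFinset d) ∪ U.erase d := by
    intro x hx
    by_cases hxd : x ∈ G.closedNeighborFinset d
    · have hxN : x ∈ G.neighborFinset d :=
        (mem_insert.1 hxd).resolve_left fun h => hdW (h ▸ hx)
      exact mem_union_right _
        (mem_erase.2 ⟨fun h => hdW (h ▸ hx), hWU (mem_inter.2 ⟨hx, hxN⟩)⟩)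
    · exact mem_union_left _ (mem_sdiff.2 ⟨hx, hxd⟩)
  have hW : G.indepPoly μ W ≤
      G.indepPoly μ (W \ G.closedNeighborFinset d) * G.indepPoly μ (U.erase d) :=
    (indepPoly_mono hμ hcover).trans (indepPoly_union_le hμ _ _)
  have hE : G.indepPoly μ (U.erase d) ≤ G.indepPoly μ U - μ d := by
    linarith [indepPoly_erase_add_le (G := G) hμ hdU]
  have hμW := mul_le_mul_of_nonneg_left (hW.trans (mul_le_mul_of_nonneg_left hE
    (indepPoly_pos hμ _).le)) (hμ d)
  rw [indepPoly_insert hdW]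
  linarith

end SimpleGraph

section AvoidSet

variable {Ω ι : Type*}

def avoidSet (A : ι → Set Ω) (T : Finset ι) : Set Ω := ⋂ j ∈ T, (A j)ᶜ

variable {A : ι → Set Ω}

theorem measurableSet_avoidSet [MeasurableSpace Ω] (hA : ∀ i, MeasurableSet (A i))
    (T : Finset ι) :
    MeasurableSet (avoidSet A T) :=
  T.measurableSet_biInter fun j _ => (hA j).compl

theorem avoidSet_anti {T U : Finset ι} (h : T ⊆ U) : avoidSet A U ⊆ avoidSet A T :=
  Set.biInter_subset_biInter_left fun _ hj => h hj

@[simp] theorem avoidSet_empty : avoidSet A ∅ = Set.univ := by simp [avoidSet]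

theorem avoidSet_insert [DecidableEq ι] (d : ι) (T : Finset ι) :
    avoidSet A (insert d T) = avoidSet A T \ A d := by
  rw [avoidSet, avoidSet, set_biInter_insert, Set.sdiff_eq, Set.inter_comm]

theorem measureReal_avoidSet_insert [DecidableEq ι] [MeasurableSpace Ω] (P : Measure Ω)
    [IsFiniteMeasure P] {d : ι} (hA : MeasurableSet (A d)) (T : Finset ι) :
    P.real (avoidSet A (insert d T)) =
      P.real (avoidSet A T) - P.real (A d ∩ avoidSet A T) := by
  rw [avoidSet_insert, Set.inter_comm, ← measureReal_inter_add_sdiff (s := avoidSet A T) hA]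
  ring

end AvoidSet

section LocalLemma

open SimpleGraph

variable {Ω ι : Type*} [MeasurableSpace Ω] [Fintype ι] [DecidableEq ι]
  {P : Measure Ω} {A : ι → Set Ω} {G : SimpleGraph ι} [DecidableRel G.Adj] {μ : ι → ℝ}

theorem le_measureReal_avoidSet_insert [IsFiniteMeasure P] {d : ι} (hA : MeasurableSet (A d))
    {T : Finset ι}
    (hkey : P.real (A d ∩ avoidSet A T) * G.indepPoly μ (G.closedNeighborFinset d \ T) ≤
      μ d * P.real (avoidSet A T)) :
    (G.indepPoly μ (G.closedNeighborFinset d \ T) - μ d) * P.real (avoidSet A T) ≤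
      G.indepPoly μ (G.closedNeighborFinset d \ T) * P.real (avoidSet A (insert d T)) := by
  rw [measureReal_avoidSet_insert P hA]
  linarith

theorem measureReal_avoidSet_mul_indepPoly_le [IsFiniteMeasure P] (hμ : ∀ i, 0 ≤ μ i)
    (hA : ∀ i, MeasurableSet (A i)) {T₀ D K : Finset ι} (hDK : D ⊆ K)
    (hT₀D : Disjoint T₀ D) (hkey : ∀ T ⊂ T₀ ∪ D, ∀ d, P.real (A d ∩ avoidSet A T) *
      G.indepPoly μ (G.closedNeighborFinset d \ T) ≤ μ d * P.real (avoidSet A T)) :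
    P.real (avoidSet A T₀) * G.indepPoly μ (K \ (T₀ ∪ D)) ≤
      P.real (avoidSet A (T₀ ∪ D)) * G.indepPoly μ (K \ T₀) := by
  induction D using Finset.induction_on with
  | empty => simp
  | @insert d D hdD ih =>
    set T := T₀ ∪ D
    have hdK : d ∈ K := hDK (mem_insert_self d D)
    have hdT : d ∉ T := by
      simpa [T, hdD] using (disjoint_right.1 hT₀D (mem_insert_self d D))
    have hTT' : T ⊂ T₀ ∪ insert d D := by
      rw [union_insert]
      exact ssubset_insert hdT
    have ih := ih ((subset_insert d D).trans hDK) (hT₀D.mono_right (subset_insert d D))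
      fun T' hT' => hkey T' (hT'.trans hTT')
    set Φ := G.indepPoly μ (G.closedNeighborFinset d \ T)
    have hdΦ : d ∈ G.closedNeighborFinset d \ T :=
      mem_sdiff.2 ⟨mem_insert_self d _, hdT⟩
    have hΦ : 0 ≤ Φ - μ d := by
      linarith [indepPoly_erase_add_le (G := G) hμ hdΦ, indepPoly_pos (G := G) hμ
        ((G.closedNeighborFinset d \ T).erase d)]
    have hstep := le_measureReal_avoidSet_insert (hA d) (hkey T hTT' d)
    have hWU : (K \ insert d T) ∩ G.neighborFinset d ⊆ G.closedNeighborFinset d \ T := by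
      intro x hx
      obtain ⟨hxW, hxN⟩ := mem_inter.1 hx
      exact mem_sdiff.2
        ⟨mem_insert_of_mem hxN, fun h => (mem_sdiff.1 hxW).2 (mem_insert_of_mem h)⟩
    have hcomb := indepPoly_mul_le hμ (notMem_sdiff_of_mem_right (mem_insert_self d T)) hdΦ hWU
    have hKT : insert d (K \ insert d T) = K \ T := by
      rw [sdiff_insert, insert_erase (mem_sdiff.2 ⟨hdK, hdT⟩)]
    rw [hKT] at hcomb
    rw [union_insert]
    refine le_of_mul_le_mul_right ?_ (indepPoly_pos (G := G) hμ (G.closedNeighborFinset d \ T))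
    calc P.real (avoidSet A T₀) * G.indepPoly μ (K \ insert d T) * Φ
        ≤ P.real (avoidSet A T₀) * ((Φ - μ d) * G.indepPoly μ (K \ T)) := by
          rw [mul_assoc]
          exact mul_le_mul_of_nonneg_left hcomb measureReal_nonneg
      _ ≤ (Φ - μ d) * (P.real (avoidSet A T) * G.indepPoly μ (K \ T₀)) := by
          rw [mul_left_comm]
          exact mul_le_mul_of_nonneg_left ih hΦ
      _ ≤ Φ * P.real (avoidSet A (insert d T)) * G.indepPoly μ (K \ T₀) := by
          rw [← mul_assoc]
          exact mul_le_mul_of_nonneg_right hstep (indepPoly_pos (G := G) hμ _).le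
      _ = P.real (avoidSet A (insert d T)) * G.indepPoly μ (K \ T₀) * Φ := by ring

variable [IsFiniteMeasure P] (hμ : ∀ i, 0 ≤ μ i) (hA : ∀ i, MeasurableSet (A i))
  (hP : ∀ i, P.real (A i) ≤ μ i / G.indepPoly μ (G.closedNeighborFinset i))
  (hdep : ∀ i (T : Finset ι), Disjoint T (G.closedNeighborFinset i) →
    P.real (A i ∩ avoidSet A T) ≤ P.real (A i) * P.real (avoidSet A T))
include hμ hA hP hdep

theorem measureReal_inter_avoidSet_mul_indepPoly_le (S : Finset ι) (i : ι) :
    P.real (A i ∩ avoidSet A S) * G.indepPoly μ (G.closedNeighborFinset i \ S) ≤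
      μ i * P.real (avoidSet A S) := by
  induction S using Finset.strongInduction generalizing i with
  | H S ih =>
  set N := G.closedNeighborFinset i
  have hratio := measureReal_avoidSet_mul_indepPoly_le hμ hA (T₀ := S \ N) inter_subset_right
    (disjoint_sdiff_inter S N) (by rw [sdiff_union_inter]; exact ih)
  rw [sdiff_union_inter] at hratio
  have hAi : P.real (A i) * G.indepPoly μ N ≤ μ i :=
    (le_div_iff₀ (indepPoly_pos hμ _)).1 (hP i)
  calc P.real (A i ∩ avoidSet A S) * G.indepPoly μ (N \ S)
      ≤ P.real (A i ∩ avoidSet A (S \ N)) * G.indepPoly μ (N \ S) := by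
        refine mul_le_mul_of_nonneg_right (measureReal_mono ?_) (indepPoly_pos hμ _).le
        exact Set.inter_subset_inter_right _ (avoidSet_anti (sdiff_subset (s := S)))
    _ ≤ P.real (A i) * P.real (avoidSet A (S \ N)) * G.indepPoly μ (N \ S) :=
        mul_le_mul_of_nonneg_right (hdep i _ disjoint_sdiff_self_left)
          (indepPoly_pos hμ _).le
    _ ≤ P.real (A i) * (P.real (avoidSet A S) * G.indepPoly μ (N \ (S \ N))) := by
        rw [mul_assoc]
        exact mul_le_mul_of_nonneg_left hratio measureReal_nonneg
    _ ≤ P.real (A i) * G.indepPoly μ N * P.real (avoidSet A S) := by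
        rw [mul_comm (P.real (avoidSet A S)), ← mul_assoc]
        gcongr
        exact indepPoly_mono hμ sdiff_subset
    _ ≤ μ i * P.real (avoidSet A S) := by gcongr

omit [IsFiniteMeasure P] in
theorem measureReal_avoidSet_pos [IsProbabilityMeasure P] (S : Finset ι) :
    0 < P.real (avoidSet A S) := by
  induction S using Finset.induction_on with
  | empty => simp
  | @insert i S hi ih =>
    have hiN : i ∈ G.closedNeighborFinset i \ S := mem_sdiff.2 ⟨mem_insert_self i _, hi⟩
    have hΦ := indepPoly_erase_add_le (G := G) hμ hiN
    have h1 := one_le_indepPoly (G := G) hμ ((G.closedNeighborFinset i \ S).erase i)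
    have hstep := le_measureReal_avoidSet_insert (hA i)
      (measureReal_inter_avoidSet_mul_indepPoly_le hμ hA hP hdep S i)
    have : 0 < G.indepPoly μ (G.closedNeighborFinset i \ S) * P.real (avoidSet A (insert i S)) :=
      (mul_pos (by linarith) ih).trans_le hstep
    exact pos_of_mul_pos_right this (indepPoly_pos hμ _).le

end LocalLemma

section ProductSpace

variable {V : Type*} {Ωv : V → Type*}

theorem dependsOn_mem_avoidSet {ι : Type*} {A : ι → Set (∀ v, Ωv v)} {s : Set V}
    {T : Finset ι} (h : ∀ j ∈ T, DependsOn (· ∈ A j) s) :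
    DependsOn (· ∈ avoidSet A T) s := by
  intro x y hxy
  simp only [avoidSet, Set.mem_iInter₂, Set.mem_compl_iff]
  exact propext (forall₂_congr fun j hj => not_congr (Iff.of_eq (h j hj hxy)))

variable [Fintype V] [∀ v, MeasurableSpace (Ωv v)]
  (Pv : ∀ v, Measure (Ωv v)) [∀ v, IsProbabilityMeasure (Pv v)]

theorem measure_pi_inter_of_dependsOn {s : Set V} {E F : Set (∀ v, Ωv v)}
    (hE : MeasurableSet E) (hF : MeasurableSet F)
    (hEs : DependsOn (· ∈ E) s) (hFs : DependsOn (· ∈ F) sᶜ) :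
    Measure.pi Pv (E ∩ F) = Measure.pi Pv E * Measure.pi Pv F := by
  classical
  have := fun v => nonempty_of_isProbabilityMeasure (Pv v)
  let e := MeasurableEquiv.piEquivPiSubtypeProd Ωv (· ∈ s)
  obtain ⟨x₀, y₀⟩ := e (fun _ => Classical.arbitrary _)
  let E' := (fun x => e.symm (x, y₀)) ⁻¹' E
  let F' := (fun y => e.symm (x₀, y)) ⁻¹' F
  have hE' : MeasurableSet E' := e.symm.measurable.comp measurable_prodMk_right hE
  have hF' : MeasurableSet F' := e.symm.measurable.comp measurable_prodMk_left hF
  have hEe : E = e ⁻¹' (E' ×ˢ Set.univ) := by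
    ext ω
    simp only [Set.mem_preimage, Set.mem_prod, Set.mem_univ, and_true, E']
    refine Iff.of_eq (hEs fun v hv => ?_)
    simp [e, MeasurableEquiv.piEquivPiSubtypeProd, hv]
  have hFe : F = e ⁻¹' (Set.univ ×ˢ F') := by
    ext ω
    simp only [Set.mem_preimage, Set.mem_prod, Set.mem_univ, true_and, F']
    refine Iff.of_eq (hFs fun v hv => ?_)
    simp [e, MeasurableEquiv.piEquivPiSubtypeProd, Set.notMem_of_mem_compl hv]
  have hpres := measurePreserving_piEquivPiSubtypeProd Pv (· ∈ s)
  rw [hEe, hFe, ← Set.preimage_inter, Set.prod_inter_prod, Set.inter_univ, Set.univ_inter,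
    hpres.measure_preimage (hE'.prod hF').nullMeasurableSet,
    hpres.measure_preimage (hE'.prod .univ).nullMeasurableSet,
    hpres.measure_preimage (MeasurableSet.univ.prod hF').nullMeasurableSet,
    Measure.prod_prod, Measure.prod_prod, Measure.prod_prod, measure_univ, measure_univ,
    mul_one, one_mul]

theorem measureReal_pi_inter_avoidSet {ι : Type*} {A : ι → Set (∀ v, Ωv v)}
    (hA : ∀ i, MeasurableSet (A i)) {vbl : ι → Set V}
    (hdet : ∀ i, DependsOn (· ∈ A i) (vbl i)) {i : ι} {T : Finset ι}
    (hT : ∀ j ∈ T, Disjoint (vbl j) (vbl i)) :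
    (Measure.pi Pv).real (A i ∩ avoidSet A T) =
      (Measure.pi Pv).real (A i) * (Measure.pi Pv).real (avoidSet A T) := by
  rw [measureReal_def, measure_pi_inter_of_dependsOn Pv (hA i) (measurableSet_avoidSet hA T)
    (hdet i) (dependsOn_mem_avoidSet fun j hj => (hdet j).mono (hT j hj).subset_compl_right),
    ENNReal.toReal_mul]
  rfl

end ProductSpace

/-- **Cluster-expansion improvement of the Moser–Tardos Local Lemma (existence
part).** Events determined by finite sets of independent random variables, with
a variable-dependency graph and the cluster-expansion condition
`P(A i) ≤ μ i / ∑_{I ⊆ Γ̄(i), I independent} ∏_{j ∈ I} μ j`, admit an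
assignment of the variables violating no event. -/
theorem cluster_expansion_moser_tardos
    {V : Type*} [Fintype V] [DecidableEq V]
    {Ωv : V → Type*} [∀ v, MeasurableSpace (Ωv v)]
    (Pv : ∀ v, Measure (Ωv v)) [∀ v, IsProbabilityMeasure (Pv v)]
    {ι : Type*} [Fintype ι] [DecidableEq ι]
    (A : ι → Set (∀ v, Ωv v)) (hA : ∀ i, MeasurableSet (A i))
    (vbl : ι → Finset V)
    (hdet : ∀ i, ∀ ω ω' : (∀ v, Ωv v),
      (∀ v ∈ vbl i, ω v = ω' v) → (ω ∈ A i ↔ ω' ∈ A i))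
    (G : SimpleGraph ι) [DecidableRel G.Adj]
    (hvbl : ∀ i j, i ≠ j → ¬ G.Adj i j → vbl i ∩ vbl j = ∅)
    (μ : ι → ℝ) (hμ : ∀ i, 0 < μ i)
    (hP : ∀ i, Measure.pi Pv (A i) ≤ ENNReal.ofReal (μ i /
      ∑ I ∈ (insert i (G.neighborFinset i)).powerset.filter
        (fun I => ∀ a ∈ I, ∀ b ∈ I, ¬ G.Adj a b), ∏ j ∈ I, μ j)) :
    ∃ ω : (∀ v, Ωv v), ∀ i, ω ∉ A i := by
  have hμ₀ : ∀ i, 0 ≤ μ i := fun i => (hμ i).le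
  have hdep : ∀ i (T : Finset ι), Disjoint T (G.closedNeighborFinset i) →
      (Measure.pi Pv).real (A i ∩ avoidSet A T) ≤
        (Measure.pi Pv).real (A i) * (Measure.pi Pv).real (avoidSet A T) := by
    refine fun i T hT => (measureReal_pi_inter_avoidSet Pv hA
      (fun i _ _ h => propext (hdet i _ _ h)) fun j hj => ?_).le
    have hj : j ∉ insert i (G.neighborFinset i) := disjoint_left.1 hT hj
    rw [mem_insert, SimpleGraph.mem_neighborFinset, not_or] at hj
    exact disjoint_coe.2 (disjoint_iff_inter_eq_empty.2 (hvbl j i hj.1 fun h => hj.2 h.symm))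
  -- `hP` decides independence of `I` via `Fintype ι`, `indepSubsets` via `Finset` membership.
  have hP' : ∀ i,
      (Measure.pi Pv).real (A i) ≤ μ i / G.indepPoly μ (G.closedNeighborFinset i) :=
    fun i => ENNReal.toReal_le_of_le_ofReal
      (div_nonneg (hμ₀ i) (SimpleGraph.indepPoly_pos hμ₀ _).le) <| by
        convert hP i using 4
        unfold SimpleGraph.indepPoly SimpleGraph.indepSubsets SimpleGraph.closedNeighborFinset
        congr
  obtain ⟨ω, hω⟩ := nonempty_of_measureReal_ne_zero
    (measureReal_avoidSet_pos hμ₀ hA hP' hdep univ).ne'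
  exact ⟨ω, fun i => Set.mem_iInter₂.1 hω i (mem_univ i)⟩
end

section
/- Let G be a simple graph on a finite index set ι, let x : ι → ℝ satisfy 0 < x i < 1 for all i, and define μ i = x i / (1 − x i). Then for every i ∈ ι, x i · ∏_{j adjacent to i in G} (1 − x j) ≤ μ i / (∑_{I ⊆ Γ̄(i), I independent in G} ∏_{j ∈ I} μ j), where Γ̄(i) denotes the closed neighborhood of i in G. In other words, the Lovász condition P(A i) ≤ x i · ∏_{j ∼ i} (1 − x j) implies the cluster-expansion condition P(A i) ≤ μ i / ∑_{I ⊆ Γ̄(i) independent} ∏_{j ∈ I} μ j under the substitution μ i = x i / (1 − x i). -/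
/-!
Since `1 + x / (1 - x) = 1 / (1 - x)`, the Lovász bound `x i * ∏_{j ∼ i} (1 - x j)` equals
`μ i / ∏_{j ∈ Γ̄(i)} (1 + μ j)`. Expanding the product gives the sum of `∏_{j ∈ I} μ j` over
all `I ⊆ Γ̄(i)`, which dominates the sum over the independent ones since `μ ≥ 0`.
-/

open Finset

namespace Finset

variable {α R : Type*} [CommSemiring R] [PartialOrder R] [IsOrderedRing R]

theorem sum_filter_powerset_prod_le_prod_one_add (s : Finset α) (p : Finset α → Prop)
    [DecidablePred p] {f : α → R} (hf : ∀ j ∈ s, 0 ≤ f j) :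
    ∑ I ∈ s.powerset.filter p, ∏ j ∈ I, f j ≤ ∏ j ∈ s, (1 + f j) := by
  rw [prod_one_add]
  exact sum_le_sum_of_subset_of_nonneg (filter_subset _ _) fun I hI _ =>
    prod_nonneg fun j hj => hf j (mem_powerset.mp hI hj)

theorem one_le_sum_filter_powerset_prod (s : Finset α) (p : Finset α → Prop)
    [DecidablePred p] (hp : p ∅) {f : α → R} (hf : ∀ j ∈ s, 0 ≤ f j) :
    1 ≤ ∑ I ∈ s.powerset.filter p, ∏ j ∈ I, f j := by
  have hempty : ∅ ∈ s.powerset.filter p := mem_filter.mpr ⟨empty_mem_powerset s, hp⟩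
  simpa using single_le_sum (f := fun I => ∏ j ∈ I, f j)
    (fun I hI => prod_nonneg fun j hj =>
      hf j (mem_powerset.mp (mem_filter.mp hI).1 hj)) hempty

end Finset

theorem one_add_div_one_sub {K : Type*} [Field K] {x : K} (hx : x ≠ 1) :
    1 + x / (1 - x) = (1 - x)⁻¹ := by
  have : 1 - x ≠ 0 := sub_ne_zero.mpr hx.symm
  field_simp
  ring

theorem mul_prod_one_sub_eq_div_prod_one_add {α K : Type*} [DecidableEq α] [Field K]
    {s : Finset α} {i : α} (hi : i ∉ s) {x : α → K} (hx : ∀ j, x j ≠ 1) :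
    x i * ∏ j ∈ s, (1 - x j) = x i / (1 - x i) / ∏ j ∈ insert i s, (1 + x j / (1 - x j)) := by
  have hx' : ∀ j, 1 - x j ≠ 0 := fun j => sub_ne_zero.mpr (hx j).symm
  simp only [one_add_div_one_sub (hx _), prod_insert hi, prod_inv_distrib]
  field_simp [hx' i, prod_ne_zero_iff.mpr fun j _ => hx' j]

/-- The Lovász condition implies the cluster-expansion condition: under the
substitution `μ i = x i / (1 - x i)`, for every vertex `i` we have
`x i * ∏_{j ~ i} (1 - x j) ≤ μ i / ∑_{I ⊆ Γ̄(i), I independent} ∏_{j ∈ I} μ j`. -/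
theorem lovasz_le_cluster_expansion
    {ι : Type*} [Fintype ι] [DecidableEq ι]
    (G : SimpleGraph ι) [DecidableRel G.Adj]
    (x : ι → ℝ) (hx0 : ∀ i, 0 < x i) (hx1 : ∀ i, x i < 1)
    (μ : ι → ℝ) (hμ : ∀ i, μ i = x i / (1 - x i)) (i : ι) :
    x i * ∏ j ∈ G.neighborFinset i, (1 - x j) ≤
      μ i / ∑ I ∈ (insert i (G.neighborFinset i)).powerset.filter
        (fun I => ∀ a ∈ I, ∀ b ∈ I, ¬ G.Adj a b), ∏ j ∈ I, μ j := by
  obtain rfl : μ = fun j => x j / (1 - x j) := funext hμ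
  have hμ_nonneg : ∀ j, 0 ≤ x j / (1 - x j) := fun j =>
    div_nonneg (hx0 j).le (sub_nonneg.mpr (hx1 j).le)
  rw [mul_prod_one_sub_eq_div_prod_one_add (G.notMem_neighborFinset_self i)
    fun j => (hx1 j).ne]
  refine div_le_div_of_nonneg_left (hμ_nonneg i) ?_ ?_
  · exact one_pos.trans_le <| one_le_sum_filter_powerset_prod _ _ (by simp)
      fun j _ => hμ_nonneg j
  · exact sum_filter_powerset_prod_le_prod_one_add _ _ fun j _ => hμ_nonneg j
end

section
/- (Moser–Tardos Branching Lemma, algebraic form.) Let G be a simple graph on a finite index set ι and let x : ι → ℝ satisfy 0 < x i < 1 for all i. Let T be a finite rooted tree with vertex set W, root r, and children function ch : W → Finset W, equipped with labels ℓ : W → ι such that: (i) for each v ∈ W, the children of v have pairwise distinct labels; and (ii) every child u ∈ ch(v) satisfies ℓ(u) ∈ Γ̄(ℓ(v)), the closed neighborhood of ℓ(v) in G. Then ∏_{v ∈ W} [ (∏_{u ∈ ch(v)} x(ℓ u)) · ∏_{B ∈ Γ̄(ℓ v) ∖ ℓ(ch(v))} (1 − x B) ] = ((1 − x(ℓ r))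 / x(ℓ r)) · ∏_{v ∈ W} [ x(ℓ v) · ∏_{B ∈ Γ̄(ℓ v), B ≠ ℓ v} (1 − x B) ]. (The left-hand side is the probability that the Moser–Tardos Galton–Watson-type branching process with attachment probabilities x produces exactly the tree T.) -/
open Finset

/-- **Moser–Tardos Branching Lemma (algebraic form).** For a finite rooted tree
`(W, r, p)` with children function `ch`, labelled by `ℓ : W → ι` so that
children of a common vertex get distinct labels lying in the closed
neighborhood of their parent's label, the probability that the Moser–Tardos
branching process produces exactly this tree equals
`((1 - x (ℓ r)) / x (ℓ r)) * ∏_v (x (ℓ v) * ∏_{B ∈ Γ̄(ℓ v), B ≠ ℓ v} (1 - x B))`. -/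
theorem moser_tardos_branching_lemma
    {ι : Type*} [Fintype ι] [DecidableEq ι]
    (G : SimpleGraph ι) [DecidableRel G.Adj]
    (x : ι → ℝ) (hx0 : ∀ i, 0 < x i) (hx1 : ∀ i, x i < 1)
    {W : Type*} [Fintype W] [DecidableEq W]
    (r : W) (p : W → W) (hroot : p r = r)
    (hreach : ∀ v : W, ∃ n : ℕ, p^[n] v = r)
    (hfix : ∀ v : W, p v = v → v = r)
    (ch : W → Finset W)
    (hch : ∀ u v : W, u ∈ ch v ↔ u ≠ r ∧ p u = v)
    (ℓ : W → ι)
    (hdist : ∀ v : W, Set.InjOn ℓ (ch v : Set W))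
    (hnbhd : ∀ v : W, ∀ u ∈ ch v, ℓ u ∈ insert (ℓ v) (G.neighborFinset (ℓ v))) :
    ∏ v : W, ((∏ u ∈ ch v, x (ℓ u)) *
        ∏ B ∈ (insert (ℓ v) (G.neighborFinset (ℓ v))) \ (ch v).image ℓ, (1 - x B)) =
      ((1 - x (ℓ r)) / x (ℓ r)) *
        ∏ v : W, (x (ℓ v) *
          ∏ B ∈ (insert (ℓ v) (G.neighborFinset (ℓ v))).erase (ℓ v), (1 - x B)) := by
  have hxne : ∀ i, x i ≠ 0 := fun i => (hx0 i).ne'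
  have h1x : ∀ i, (1 : ℝ) - x i ≠ 0 := fun i => sub_ne_zero.mpr (hx1 i).ne'
  set P : W → ℝ := fun v => ∏ B ∈ insert (ℓ v) (G.neighborFinset (ℓ v)), (1 - x B) with hP
  -- per-vertex rewriting of the LHS factor
  have step1 : ∀ v : W, (∏ u ∈ ch v, x (ℓ u)) *
      ∏ B ∈ (insert (ℓ v) (G.neighborFinset (ℓ v))) \ (ch v).image ℓ, (1 - x B)
      = P v * ∏ u ∈ ch v, (x (ℓ u) / (1 - x (ℓ u))) := by
    intro v
    have hsub : (ch v).image ℓ ⊆ insert (ℓ v) (G.neighborFinset (ℓ v)) := by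
      intro b hb
      obtain ⟨u, hu, rfl⟩ := Finset.mem_image.mp hb
      exact hnbhd v u hu
    have himg : ∏ B ∈ (ch v).image ℓ, (1 - x B) = ∏ u ∈ ch v, (1 - x (ℓ u)) :=
      Finset.prod_image (fun a ha b hb => hdist v ha hb)
    have hsd := Finset.prod_sdiff (f := fun B => 1 - x B) hsub
    rw [himg] at hsd
    have hne : (∏ u ∈ ch v, (1 - x (ℓ u))) ≠ 0 :=
      Finset.prod_ne_zero_iff.mpr fun u _ => h1x (ℓ u)
    have hsdiff : ∏ B ∈ (insert (ℓ v) (G.neighborFinset (ℓ v))) \ (ch v).image ℓ, (1 - x B)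
        = P v / ∏ u ∈ ch v, (1 - x (ℓ u)) := by
      rw [eq_div_iff hne]; exact hsd
    rw [hsdiff, Finset.prod_div_distrib]
    field_simp
  -- per-vertex rewriting of the RHS factor
  have step2 : ∀ v : W, x (ℓ v) *
      ∏ B ∈ (insert (ℓ v) (G.neighborFinset (ℓ v))).erase (ℓ v), (1 - x B)
      = P v * (x (ℓ v) / (1 - x (ℓ v))) := by
    intro v
    have hmem : ℓ v ∈ insert (ℓ v) (G.neighborFinset (ℓ v)) := Finset.mem_insert_self _ _
    have := Finset.mul_prod_erase _ (fun B => 1 - x B) hmem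
    rw [hP]
    simp only
    rw [← this, mul_right_comm]
    congr 1
    rw [mul_comm, div_mul_cancel₀ _ (h1x (ℓ v))]
  -- children products collapse to a product over non-root vertices
  have hfib : ∀ g : W → ℝ, ∏ v : W, ∏ u ∈ ch v, g u = ∏ u ∈ Finset.univ.erase r, g u := by
    intro g
    have hset : ∀ v : W, ch v = (Finset.univ.erase r).filter (fun u => p u = v) := by
      intro v
      ext u
      simp [hch, Finset.mem_filter, Finset.mem_erase, and_comm]
    calc ∏ v : W, ∏ u ∈ ch v, g u
        = ∏ v : W, ∏ u ∈ (Finset.univ.erase r).filter (fun u => p u = v), g u := by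
          simp_rw [hset]
      _ = ∏ u ∈ Finset.univ.erase r, g u :=
          Finset.prod_fiberwise_of_maps_to (fun u _ => Finset.mem_univ (p u)) g
  have hchprod : ∏ v : W, ∏ u ∈ ch v, (x (ℓ u) / (1 - x (ℓ u)))
      = (∏ v : W, (x (ℓ v) / (1 - x (ℓ v)))) / (x (ℓ r) / (1 - x (ℓ r))) := by
    rw [hfib]
    rw [eq_div_iff (div_ne_zero (hxne _) (h1x _))]
    rw [mul_comm]
    simpa using Finset.mul_prod_erase Finset.univ (fun u => x (ℓ u) / (1 - x (ℓ u))) (Finset.mem_univ r)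
  simp_rw [step1, step2, Finset.prod_mul_distrib, hchprod]
  have hPne : (∏ v : W, P v) ≠ 0 := by
    apply Finset.prod_ne_zero_iff.mpr
    intro v _
    exact Finset.prod_ne_zero_iff.mpr fun B _ => h1x B
  field_simp
end

section
/- (Improved Branching Lemma, algebraic form.) Let G be a simple graph on a finite index set ι, let μ : ι → ℝ satisfy 0 < μ i for all i, and define x i = μ i / (μ i + 1). Let T be a finite rooted tree with vertex set W, root r, and children function ch : W → Finset W, equipped with labels ℓ : W → ι such that: (i) for each v ∈ W, the function ℓ is injective on ch(v); (ii) every child u ∈ ch(v) satisfies ℓ(u) ∈ Γ̄(ℓ(v)); and (iii) for each v ∈ W, the label set ℓ(ch(v)) is an independent set in G. For v ∈ W and I ⊆ Γ̄(ℓ v), write w_v(I) = (∏_{j ∈ I} x j) · (∏_{B ∈ Γ̄(ℓ v) ∖ I} (1 − x B)). Then ∏_{v ∈ W} [ w_v(ℓ(ch(v))) / (∑_{I ⊆ Γ̄(ℓ v), I independent in G} w_v(I)) ] = (μ(ℓ r))⁻¹ · ∏_{v ∈ W} [ μ(ℓ v) / (∑_{I ⊆ Γ̄(ℓ v), I independent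 in G} ∏_{j ∈ I} μ j) ]. (The left-hand side is the probability that the modified branching process with rejection sampling of non-independent child sets produces exactly the tree T.) -/
open Finset

/-!
With `x i = μ i / (μ i + 1)` we have `1 - x i = 1 / (μ i + 1)`, so every weight
`w_v(I)` with `I ⊆ Γ̄(ℓ v)` equals `∏_{j ∈ I} μ j / ∏_{B ∈ Γ̄(ℓ v)} (μ B + 1)`. The common
denominator cancels from each factor of the left-hand side, leaving
`∏_{u ∈ ch v} μ (ℓ u) / ∑_{I} ∏_{j ∈ I} μ j`. Every vertex except the root is the child of
exactly one vertex, so the numerators multiply to `∏_{v ≠ r} μ (ℓ v)`.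
-/

section Weights

variable {ι K : Type*} [DecidableEq ι] [Field K]

theorem prod_div_add_one_mul_prod_one_sub_div_add_one {μ : ι → K} {s t : Finset ι}
    (hst : s ⊆ t) (hμ : ∀ j ∈ t, μ j + 1 ≠ 0) :
    (∏ j ∈ s, μ j / (μ j + 1)) * ∏ j ∈ t \ s, (1 - μ j / (μ j + 1)) =
      (∏ j ∈ s, μ j) / ∏ j ∈ t, (μ j + 1) := by
  have one_sub : ∀ j ∈ t \ s, 1 - μ j / (μ j + 1) = 1 / (μ j + 1) := fun j hj => by
    field_simp [hμ j (mem_sdiff.1 hj).1]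
    ring
  rw [prod_congr rfl one_sub, prod_div_distrib, prod_div_distrib, prod_const_one,
    ← prod_sdiff hst]
  ring

theorem weight_div_sum_weights_eq {μ : ι → K} {t J : Finset ι} {F : Finset (Finset ι)}
    (hJ : J ⊆ t) (hF : ∀ I ∈ F, I ⊆ t) (hμ : ∀ j ∈ t, μ j + 1 ≠ 0) :
    ((∏ j ∈ J, μ j / (μ j + 1)) * ∏ j ∈ t \ J, (1 - μ j / (μ j + 1))) /
        ∑ I ∈ F, (∏ j ∈ I, μ j / (μ j + 1)) * ∏ j ∈ t \ I, (1 - μ j / (μ j + 1)) =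
      (∏ j ∈ J, μ j) / ∑ I ∈ F, ∏ j ∈ I, μ j := by
  rw [sum_congr rfl fun I hI => prod_div_add_one_mul_prod_one_sub_div_add_one (hF I hI) hμ,
    ← sum_div, prod_div_add_one_mul_prod_one_sub_div_add_one hJ hμ,
    div_div_div_cancel_right₀ (prod_ne_zero_iff.2 hμ)]

end Weights

theorem prod_prod_children_mul_root {W β : Type*} [Fintype W] [CommMonoid β] {r : W}
    {p : W → W} {ch : W → Finset W} (hch : ∀ u v : W, u ∈ ch v ↔ u ≠ r ∧ p u = v)
    (f : W → β) :
    (∏ v, ∏ u ∈ ch v, f u) * f r = ∏ v, f v := by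
  classical
  have ch_eq : ∀ v, ch v = {u ∈ univ.erase r | p u = v} := fun v => by
    ext u
    simp [hch]
  simp only [ch_eq]
  rw [prod_fiberwise_of_maps_to (fun u _ => mem_univ (p u)), prod_erase_mul _ _ (mem_univ r)]

theorem improved_branching_lemma_general
    {ι : Type*} [Fintype ι] [DecidableEq ι]
    (G : SimpleGraph ι) [DecidableRel G.Adj]
    (μ : ι → ℝ) (hμ : ∀ i, 0 < μ i)
    (x : ι → ℝ) (hx : ∀ i, x i = μ i / (μ i + 1))
    {W : Type*} [Fintype W]
    (r : W) (p : W → W)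
    (ch : W → Finset W)
    (hch : ∀ u v : W, u ∈ ch v ↔ u ≠ r ∧ p u = v)
    (ℓ : W → ι)
    (hdist : ∀ v : W, Set.InjOn ℓ (ch v : Set W))
    (hnbhd : ∀ v : W, ∀ u ∈ ch v, ℓ u ∈ insert (ℓ v) (G.neighborFinset (ℓ v))) :
    ∏ v : W,
        (((∏ j ∈ (ch v).image ℓ, x j) *
            ∏ B ∈ (insert (ℓ v) (G.neighborFinset (ℓ v))) \ (ch v).image ℓ, (1 - x B)) /
          ∑ I ∈ (insert (ℓ v) (G.neighborFinset (ℓ v))).powerset.filter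
              (fun I => ∀ a ∈ I, ∀ b ∈ I, ¬ G.Adj a b),
            ((∏ j ∈ I, x j) *
              ∏ B ∈ (insert (ℓ v) (G.neighborFinset (ℓ v))) \ I, (1 - x B))) =
      (μ (ℓ r))⁻¹ *
        ∏ v : W,
          (μ (ℓ v) /
            ∑ I ∈ (insert (ℓ v) (G.neighborFinset (ℓ v))).powerset.filter
                (fun I => ∀ a ∈ I, ∀ b ∈ I, ¬ G.Adj a b),
              ∏ j ∈ I, μ j) := by
  obtain rfl : x = fun i => μ i / (μ i + 1) := funext hx
  have add_one_ne_zero : ∀ j, μ j + 1 ≠ 0 := fun j => by linarith [hμ j]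
  rw [prod_congr rfl fun v _ => weight_div_sum_weights_eq (image_subset_iff.2 (hnbhd v))
      (fun I hI => mem_powerset.1 (mem_filter.1 hI).1) fun j _ => add_one_ne_zero j,
    prod_div_distrib, prod_div_distrib]
  simp only [prod_image (hdist _)]
  rw [← prod_prod_children_mul_root hch (fun v => μ (ℓ v)), mul_comm _ (μ (ℓ r)), mul_div_assoc,
    inv_mul_cancel_left₀ (hμ (ℓ r)).ne']

/-- **Improved Branching Lemma (algebraic form).** For a finite rooted tree
`(W, r, p)` with children function `ch`, labelled by `ℓ : W → ι` so that
children of a common vertex get distinct labels lying in the closed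
neighborhood of their parent's label and forming an independent set of `G`,
the probability that the modified branching process (with rejection sampling of
non-independent child sets) produces exactly this tree equals
`(μ (ℓ r))⁻¹ * ∏_v (μ (ℓ v) / ∑_{I ⊆ Γ̄(ℓ v), I indep.} ∏_{j ∈ I} μ j)`,
where `x i = μ i / (μ i + 1)` and for `I ⊆ Γ̄(ℓ v)` the weight is
`w_v(I) = (∏_{j ∈ I} x j) * (∏_{B ∈ Γ̄(ℓ v) ∖ I} (1 - x B))`. -/
theorem improved_branching_lemma
    {ι : Type*} [Fintype ι] [DecidableEq ι]
    (G : SimpleGraph ι) [DecidableRel G.Adj]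
    (μ : ι → ℝ) (hμ : ∀ i, 0 < μ i)
    (x : ι → ℝ) (hx : ∀ i, x i = μ i / (μ i + 1))
    {W : Type*} [Fintype W] [DecidableEq W]
    (r : W) (p : W → W) (hroot : p r = r)
    (hreach : ∀ v : W, ∃ n : ℕ, p^[n] v = r)
    (hfix : ∀ v : W, p v = v → v = r)
    (ch : W → Finset W)
    (hch : ∀ u v : W, u ∈ ch v ↔ u ≠ r ∧ p u = v)
    (ℓ : W → ι)
    (hdist : ∀ v : W, Set.InjOn ℓ (ch v : Set W))
    (hnbhd : ∀ v : W, ∀ u ∈ ch v, ℓ u ∈ insert (ℓ v) (G.neighborFinset (ℓ v)))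
    (hindep : ∀ v : W, ∀ a ∈ (ch v).image ℓ, ∀ b ∈ (ch v).image ℓ, ¬ G.Adj a b) :
    ∏ v : W,
        (((∏ j ∈ (ch v).image ℓ, x j) *
            ∏ B ∈ (insert (ℓ v) (G.neighborFinset (ℓ v))) \ (ch v).image ℓ, (1 - x B)) /
          ∑ I ∈ (insert (ℓ v) (G.neighborFinset (ℓ v))).powerset.filter
              (fun I => ∀ a ∈ I, ∀ b ∈ I, ¬ G.Adj a b),
            ((∏ j ∈ I, x j) *
              ∏ B ∈ (insert (ℓ v) (G.neighborFinset (ℓ v))) \ I, (1 - x B))) =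
      (μ (ℓ r))⁻¹ *
        ∏ v : W,
          (μ (ℓ v) /
            ∑ I ∈ (insert (ℓ v) (G.neighborFinset (ℓ v))).powerset.filter
                (fun I => ∀ a ∈ I, ∀ b ∈ I, ¬ G.Adj a b),
              ∏ j ∈ I, μ j) :=
  improved_branching_lemma_general G μ hμ x hx r p ch hch ℓ hdist hnbhd
end
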